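/- Let ν ∈ F_{C_n} and 1 ≤ k ≤ n. Then for any formula α: (1) if ν(α) = T_n then ν(α^k) = T_n; (2) if ν(α) = t^n_i for some 0 ≤ i ≤ k−2 then ν(α^k) = T_n; (3) if ν(α) = t^n_{k−1} then ν(α^k) = F_n; (4) if ν(α) = t^n_i for k ≤ i ≤ n−1 then ν(α^k) = t^n_{i−k}; (5) if ν(α) = F_n then ν(α^k) = T_n. -/
import Mathlib


/-- Formulas over the signature Σ (¬ unary; ∧, ∨, → binary). -/
inductive PFs : Type
  | var : ℕ → PFs
  | neg : PFs → PFs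
  | and : PFs → PFs → PFs
  | or : PFs → PFs → PFs
  | imp : PFs → PFs → PFs

/-- `pw α k` is `α^k`: `α^0 = α` and `α^{j+1} = ¬(α^j ∧ ¬(α^j))`. -/
def pw (α : PFs) : ℕ → PFs
  | 0 => α
  | k + 1 => PFs.neg ((pw α k).and (PFs.neg (pw α k)))

/-- Snapshots for `C_n`: `(n+1)`-tuples over `2` with at most one coordinate
equal to `0` (i.e. `false`). -/
def Snap (n : ℕ) : Type :=
  {z : Fin (n + 1) → Bool // ∀ i j : Fin (n + 1), z i = false → z j = false → i = j}

/-- `T_n = (1,0,1,…,1)`. -/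
def Tval (n : ℕ) : Snap n :=
  ⟨fun i => decide ((i : ℕ) ≠ 1), by
    intro i j hi hj
    simp only [decide_eq_false_iff_not, not_not] at hi hj
    exact Fin.ext (hi.trans hj.symm)⟩

/-- `F_n = (0,1,1,…,1)`. -/
def Fval (n : ℕ) : Snap n :=
  ⟨fun i => decide ((i : ℕ) ≠ 0), by
    intro i j hi hj
    simp only [decide_eq_false_iff_not, not_not] at hi hj
    exact Fin.ext (hi.trans hj.symm)⟩

/-- `t^n_i`: all coordinates `1` except (when it exists) the one in position
`i+3`, i.e. index `i+2`; for `i = n-1` all coordinates equal `1`. -/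
def tval (n i : ℕ) : Snap n :=
  ⟨fun j => decide ((j : ℕ) ≠ i + 2), by
    intro j j' hj hj'
    simp only [decide_eq_false_iff_not, not_not] at hj hj'
    exact Fin.ext (hj.trans hj'.symm)⟩

/-- Designated values `D_n = B_n \ {F_n} = {z : z₁ = 1}`. -/
def Dn (n : ℕ) : Set (Snap n) := {z | z.1 0 = true}

/-- Boolean values `Boo_n = {z : z₁ ∧ z₂ = 0}`. -/
def BooN (n : ℕ) : Set (Snap n) := {z | (z.1 0 && z.1 1) = false}

/-- Inconsistent values `I_n = B_n \ {T_n, F_n}`. -/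
def InN (n : ℕ) : Set (Snap n) := {z | z ≠ Tval n ∧ z ≠ Fval n}

/-- `¬̃ z = {w : w₁ = z₂ and w₂ ≤ z₁}`. -/
def negN {n : ℕ} (z : Snap n) : Set (Snap n) :=
  {w | w.1 0 = z.1 1 ∧ (w.1 1 = true → z.1 0 = true)}

open Classical in
/-- `z #̃ w`: Boolean (inside `Boo_n`) when both arguments are Boolean values,
non-deterministic (first coordinate determined classically) otherwise. -/
noncomputable def binN {n : ℕ} (f : Bool → Bool → Bool) (z w : Snap n) :
    Set (Snap n) :=
  if z ∈ BooN n ∧ w ∈ BooN n then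
    {u | u ∈ BooN n ∧ u.1 0 = f (z.1 0) (w.1 0)}
  else
    {u | u.1 0 = f (z.1 0) (w.1 0)}

/-- `ν` is a multialgebra homomorphism into `A_{C_n}`. -/
def IsHomN (n : ℕ) (ν : PFs → Snap n) : Prop :=
  (∀ α, ν (PFs.neg α) ∈ negN (ν α)) ∧
  (∀ α β, ν (PFs.and α β) ∈ binN (· && ·) (ν α) (ν β)) ∧
  (∀ α β, ν (PFs.or α β) ∈ binN (· || ·) (ν α) (ν β)) ∧
  (∀ α β, ν (PFs.imp α β) ∈ binN (fun a b => !a || b) (ν α) (ν β))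

/-- `ν ∈ F_{C_n}`: a homomorphism satisfying the restrictions on valuations. -/
def FCn (n : ℕ) (ν : PFs → Snap n) : Prop :=
  IsHomN n ν ∧
  (∀ α, ν α = tval n 0 → ν (PFs.and α (PFs.neg α)) = Tval n) ∧
  (∀ α k, 1 ≤ k → k ≤ n - 1 → ν α = tval n k →
    ν (PFs.and α (PFs.neg α)) ∈ InN n ∧ ν (pw α 1) = tval n (k - 1))

section Aux

variable {n : ℕ}

lemma val_one_eq (hn : 2 ≤ n) : ((1 : Fin (n+1)) : ℕ) = 1 := by
  have : (1 : ℕ) % (n+1) = 1 := Nat.mod_eq_of_lt (by omega)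
  simp [Fin.val_one', this]

lemma Tval_0 : (Tval n).1 0 = true := by simp [Tval]

lemma Tval_1 (hn : 2 ≤ n) : (Tval n).1 1 = false := by
  simp only [Tval, val_one_eq hn]; simp

lemma Fval_0 : (Fval n).1 0 = false := by simp [Fval]

lemma Fval_1 (hn : 2 ≤ n) : (Fval n).1 1 = true := by
  simp only [Fval, val_one_eq hn]; simp

lemma tval_0 {i : ℕ} : (tval n i).1 0 = true := by simp [tval]

lemma tval_1 (hn : 2 ≤ n) {i : ℕ} : (tval n i).1 1 = true := by
  simp only [tval, val_one_eq hn]; simp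

lemma snap_eq_Fval (z : Snap n) (h : z.1 0 = false) : z = Fval n := by
  apply Subtype.ext; funext j
  by_cases hj : z.1 j = false
  · have h0 : (0 : Fin (n+1)) = j := z.2 0 j h hj
    rw [hj, ← h0]; simp [Fval]
  · rw [eq_true_of_ne_false hj]
    symm
    simp only [Fval, decide_eq_true_iff]
    intro hj0
    exact hj (by rwa [show j = 0 from Fin.ext (by simp [hj0])])

lemma snap_eq_Tval (hn : 2 ≤ n) (z : Snap n) (h : z.1 1 = false) : z = Tval n := by
  apply Subtype.ext; funext j
  by_cases hj : z.1 j = false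
  · have h0 : (1 : Fin (n+1)) = j := z.2 1 j h hj
    rw [hj, ← h0]; simp only [Tval, val_one_eq hn]; simp
  · rw [eq_true_of_ne_false hj]
    symm
    simp only [Tval, decide_eq_true_iff]
    intro hj0
    exact hj (by rwa [show j = 1 from Fin.ext (by rw [hj0, val_one_eq hn])])

lemma binN_fst {f : Bool → Bool → Bool} {z w u : Snap n}
    (h : u ∈ binN f z w) : u.1 0 = f (z.1 0) (w.1 0) := by
  unfold binN at h
  split_ifs at h
  · exact h.2
  · exact h

lemma pw_pw (α : PFs) (k : ℕ) : pw (pw α 1) k = pw α (k + 1) := by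
  induction k with
  | zero => rfl
  | succ k ih =>
      show PFs.neg ((pw (pw α 1) k).and (PFs.neg (pw (pw α 1) k)))
        = PFs.neg ((pw α (k+1)).and (PFs.neg (pw α (k+1))))
      rw [ih]

lemma step1 (hn : 2 ≤ n) (ν : PFs → Snap n) (hν : FCn n ν) (α : PFs) :
    (ν α = Tval n → ν (pw α 1) = Tval n) ∧
    (ν α = Fval n → ν (pw α 1) = Tval n) ∧
    (ν α = tval n 0 → ν (pw α 1) = Fval n) ∧
    (∀ i, 1 ≤ i → i ≤ n - 1 → ν α = tval n i → ν (pw α 1) = tval n (i - 1)) := by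
  obtain ⟨⟨hneg, hand, -, -⟩, hc2, hc3⟩ := hν
  have hpw1 : pw α 1 = PFs.neg (PFs.and α (PFs.neg α)) := rfl
  have finish : ν (PFs.and α (PFs.neg α)) = Fval n → ν (pw α 1) = Tval n := by
    intro hu
    rw [hpw1]
    apply snap_eq_Tval hn
    have hv := hneg (PFs.and α (PFs.neg α))
    rw [hu] at hv
    rcases Bool.eq_false_or_eq_true ((ν (PFs.neg (PFs.and α (PFs.neg α)))).1 1) with h1 | h1
    · have := hv.2 h1
      rw [Fval_0] at this
      exact absurd this (by simp)
    · exact h1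
  refine ⟨?_, ?_, ?_, ?_⟩
  · intro h
    apply finish
    apply snap_eq_Fval
    have hw : (ν (PFs.neg α)).1 0 = false := by
      have := (hneg α).1
      rw [h, Tval_1 hn] at this; exact this
    have := binN_fst (hand α (PFs.neg α))
    rw [hw, Bool.and_false] at this; exact this
  · intro h
    apply finish
    apply snap_eq_Fval
    have := binN_fst (hand α (PFs.neg α))
    rw [h, Fval_0, Bool.false_and] at this; exact this
  · intro h
    have hu := hc2 α h
    rw [hpw1]
    apply snap_eq_Fval
    have hv := (hneg (PFs.and α (PFs.neg α))).1
    rw [hu, Tval_1 hn] at hv; exact hv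
  · intro i hi1 hi2 h
    exact (hc3 α i hi1 hi2 h).2

end Aux

/-- Lemma on powers of a formula: for `ν ∈ F_{C_n}` and
`1 ≤ k ≤ n`, the value of `α^k` is determined by the value of `α` as in
Table 1 of the paper. -/
theorem stmt_10 (n : ℕ) (hn : 2 ≤ n) (ν : PFs → Snap n) (hν : FCn n ν)
    (k : ℕ) (hk1 : 1 ≤ k) (hk2 : k ≤ n) (α : PFs) :
    (ν α = Tval n → ν (pw α k) = Tval n) ∧
    (∀ i, i + 2 ≤ k → ν α = tval n i → ν (pw α k) = Tval n) ∧
    (ν α = tval n (k - 1) → ν (pw α k) = Fval n) ∧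
    (∀ i, k ≤ i → i ≤ n - 1 → ν α = tval n i → ν (pw α k) = tval n (i - k)) ∧
    (ν α = Fval n → ν (pw α k) = Tval n) := by
  suffices H : ∀ k, 1 ≤ k → k ≤ n → ∀ α,
      (ν α = Tval n → ν (pw α k) = Tval n) ∧
      (∀ i, i + 2 ≤ k → ν α = tval n i → ν (pw α k) = Tval n) ∧
      (ν α = tval n (k - 1) → ν (pw α k) = Fval n) ∧
      (∀ i, k ≤ i → i ≤ n - 1 → ν α = tval n i → ν (pw α k) = tval n (i - k)) ∧
      (ν α = Fval n → ν (pw α k) = Tval n) by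
    exact H k hk1 hk2 α
  clear hk1 hk2 α
  intro k hk1
  induction k, hk1 using Nat.le_induction with
  | base =>
      intro _ α
      obtain ⟨s1, s2, s3, s4⟩ := step1 hn ν hν α
      exact ⟨s1, fun i hi _ => by omega, s3, fun i hi1 hi2 h => s4 i hi1 hi2 h, s2⟩
  | succ k hk IH =>
      intro hk2 α
      have IH' := IH (by omega)
      obtain ⟨s1, s2, s3, s4⟩ := step1 hn ν hν α
      have hrw : pw α (k + 1) = pw (pw α 1) k := (pw_pw α k).symm
      refine ⟨?_, ?_, ?_, ?_, ?_⟩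
      · intro h
        rw [hrw]
        exact (IH' (pw α 1)).1 (s1 h)
      · intro i hi h
        rw [hrw]
        rcases Nat.eq_zero_or_pos i with hi0 | hi0
        · subst hi0
          exact (IH' (pw α 1)).2.2.2.2 (s3 h)
        · have hv : ν (pw α 1) = tval n (i - 1) := s4 i hi0 (by omega) h
          exact (IH' (pw α 1)).2.1 (i - 1) (by omega) hv
      · intro h
        rw [hrw]
        have h' : ν α = tval n k := by
          rw [show k + 1 - 1 = k from rfl] at h; exact h
        have hv : ν (pw α 1) = tval n (k - 1) := s4 k hk (by omega) h'
        exact (IH' (pw α 1)).2.2.1 hv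
      · intro i hi1 hi2 h
        rw [hrw]
        have hv : ν (pw α 1) = tval n (i - 1) := s4 i (by omega) hi2 h
        have := (IH' (pw α 1)).2.2.2.1 (i - 1) (by omega) (by omega) hv
        rw [this, show i - 1 - k = i - (k + 1) by omega]
      · intro h
        rw [hrw]
        exact (IH' (pw α 1)).1 (s2 h)
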